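/- arXiv:2101.03647 — 12 statements merged into one kernel-verified Lean document; each statement's English description precedes it below -/
import Mathlib

section
/- Let Σ be a signature, V a set of variables and κ > 0 a cardinal, with V ∪ Σ₀ ≠ ∅. Every submultialgebra 𝒜 of mT(Σ, V, κ) is generated by its ground G(𝒜). -/
universe u

/-- A `Σ`-multialgebra over the signature `S` (a family of sets of `n`-ary
function symbols) with universe `A`: each symbol is interpreted as a
multioperation returning a non-empty set of values. -/
structure MultiAlg (S : ℕ → Type u) (A : Type u) where
  op : ∀ {n : ℕ}, S n → (Fin n → A) → Set A
  op_nonempty : ∀ {n : ℕ} (σ : S n) (as : Fin n → A), (op σ as).Nonempty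

namespace MultiAlg

variable {S : ℕ → Type u} {A B : Type u}

/-- The build of a multialgebra: the union of all outputs of multioperations. -/
def build (M : MultiAlg S A) : Set A :=
  {a | ∃ (n : ℕ) (σ : S n) (as : Fin n → A), a ∈ M.op σ as}

/-- The ground of a multialgebra: its universe minus its build. -/
def ground (M : MultiAlg S A) : Set A := (M.build)ᶜ

/-- Homomorphisms of multialgebras. -/
def IsHom (M : MultiAlg S A) (N : MultiAlg S B) (f : A → B) : Prop :=
  ∀ {n : ℕ} (σ : S n) (as : Fin n → A), f '' M.op σ as ⊆ N.op σ (fun i => f (as i))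

/-- Full homomorphisms of multialgebras. -/
def IsFullHom (M : MultiAlg S A) (N : MultiAlg S B) (f : A → B) : Prop :=
  ∀ {n : ℕ} (σ : S n) (as : Fin n → A), f '' M.op σ as = N.op σ (fun i => f (as i))

/-- An isomorphism is a bijective full homomorphism. -/
def IsIso (M : MultiAlg S A) (N : MultiAlg S B) (f : A → B) : Prop :=
  IsFullHom M N f ∧ Function.Bijective f

/-- `N`, a multialgebra structure on the subset `Bc ⊆ A`, is a submultialgebra
of `M` if each of its multioperations is contained in the corresponding one of `M`. -/
def IsSubMultiAlg (M : MultiAlg S A) {Bc : Set A} (N : MultiAlg S ↥Bc) : Prop :=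
  ∀ {n : ℕ} (σ : S n) (bs : Fin n → ↥Bc),
    Subtype.val '' N.op σ bs ⊆ M.op σ (fun i => (bs i : A))

/-- The increasing family `⟨X⟩ₘ` of subsets generated by `X` in `M`. -/
def genFrom (M : MultiAlg S A) (X : Set A) : ℕ → Set A
  | 0 => X ∪ {a | ∃ σ : S 0, a ∈ M.op σ Fin.elim0}
  | m + 1 => genFrom M X m ∪
      {a | ∃ (n : ℕ) (σ : S n) (as : Fin n → A),
        (∀ i, as i ∈ genFrom M X m) ∧ a ∈ M.op σ as}

/-- The set `⟨X⟩` generated by `X` in `M`. -/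
def gen (M : MultiAlg S A) (X : Set A) : Set A := ⋃ m, M.genFrom X m

/-- `M` is generated by `X` if `⟨X⟩` is the whole universe. -/
def GeneratedBy (M : MultiAlg S A) (X : Set A) : Prop := M.gen X = Set.univ

/-- A multialgebra is disconnected when distinct multioperation instances
have disjoint outputs. -/
def Disconnected (M : MultiAlg S A) : Prop :=
  ∀ {n m : ℕ} (σ : S n) (θ : S m) (as : Fin n → A) (bs : Fin m → A),
    (M.op σ as ∩ M.op θ bs).Nonempty → n = m ∧ HEq σ θ ∧ HEq as bs

/-- A collection of choices from `M` to `N`: for every symbol `σ`, inputs in `A`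
and inputs in `B`, a function from `σ_M(as)` to `σ_N(bs)`. -/
structure ChoiceCol (M : MultiAlg S A) (N : MultiAlg S B) where
  choice : ∀ {n : ℕ} (σ : S n) (as : Fin n → A) (bs : Fin n → B),
    {a // a ∈ M.op σ as} → {b // b ∈ N.op σ bs}

/-- `M` is choice-dependent freely (cdf-) generated by `X ⊆ A`: for every
multialgebra `N`, function `f : X → B` and collection of choices `C`, there is
a unique homomorphism extending `f` and compatible with `C`. -/
def IsCdfGenerated (M : MultiAlg S A) (X : Set A) : Prop :=
  ∀ (B : Type u) [Nonempty B] (N : MultiAlg S B) (f : ↥X → B) (C : ChoiceCol M N),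
    ∃! g : A → B, IsHom M N g ∧ (∀ x : ↥X, g x = f x) ∧
      ∀ {n : ℕ} (σ : S n) (as : Fin n → A) (a : A) (ha : a ∈ M.op σ as),
        g a = (C.choice σ as (fun i => g (as i)) ⟨a, ha⟩).1

/-- A strong basis of `M` is a minimum generating set. -/
def IsStrongBasis (M : MultiAlg S A) (Bs : Set A) : Prop :=
  M.GeneratedBy Bs ∧ ∀ S' : Set A, M.GeneratedBy S' → Bs ⊆ S'

/-- A chain in `M`: a sequence in which each element belongs to the output of a
multioperation (of positive arity) having the next element among its inputs. -/
def IsChainSeq (M : MultiAlg S A) (a : ℕ → A) : Prop :=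
  ∀ k : ℕ, ∃ (m : ℕ) (σ : S (m + 1)) (cs : Fin (m + 1) → A) (j : Fin (m + 1)),
    cs j = a (k + 1) ∧ a k ∈ M.op σ cs

/-- A multialgebra is chainless when it has no chains. -/
def Chainless (M : MultiAlg S A) : Prop := ¬ ∃ a : ℕ → A, M.IsChainSeq a

/-- `M` satisfies the universal mapping property for the class of all
`Σ`-multialgebras over `X ⊆ A`. -/
def HasUMP (M : MultiAlg S A) (X : Set A) : Prop :=
  ∀ (B : Type u) [Nonempty B] (N : MultiAlg S B) (f : ↥X → B),
    ∃! g : A → B, IsHom M N g ∧ ∀ x : ↥X, g x = f x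

end MultiAlg

/-- Absolutely free terms over the signature `S` with variables `V`. -/
inductive MTerm (S : ℕ → Type u) (V : Type u) : Type u
  | var : V → MTerm S V
  | node : {n : ℕ} → S n → (Fin n → MTerm S V) → MTerm S V

/-- The expanded signature `Σ^κ`, with `Σₙ^κ = Σₙ × κ`. -/
def expSig (S : ℕ → Type u) (K : Type u) : ℕ → Type u := fun n => S n × K

/-- The `κ`-branching multialgebra of non-deterministic terms `mT(Σ, V, κ)`:
its universe is `T(Σ^κ, V)` and `σ(α₁,…,αₙ) = {σ^β α₁⋯αₙ : β ∈ κ}`. -/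
def mT (S : ℕ → Type u) (V : Type u) (K : Type u) [Nonempty K] :
    MultiAlg S (MTerm (expSig S K) V) where
  op {_} σ αs := {t | ∃ β : K, t = MTerm.node (σ, β) αs}
  op_nonempty {_} σ αs :=
    ⟨MTerm.node (σ, Classical.arbitrary K) αs, Classical.arbitrary K, rfl⟩

namespace MultiAlg

variable {S : ℕ → Type u} {A : Type u}

lemma genFrom_mono (M : MultiAlg S A) (X : Set A) : Monotone (M.genFrom X) :=
  monotone_nat_of_le_succ fun _ => Set.subset_union_left

lemma subset_gen (M : MultiAlg S A) (X : Set A) : X ⊆ M.gen X :=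
  fun _ ha => Set.mem_iUnion.2 ⟨0, Or.inl ha⟩

lemma mem_gen_of_mem_op (M : MultiAlg S A) (X : Set A) {n : ℕ} (σ : S n) (as : Fin n → A)
    (has : ∀ i, as i ∈ M.gen X) {a : A} (ha : a ∈ M.op σ as) : a ∈ M.gen X := by
  choose m hm using fun i => Set.mem_iUnion.1 (has i)
  have has' : ∀ i, as i ∈ M.genFrom X (Finset.univ.sup m) := fun i =>
    M.genFrom_mono X (Finset.le_sup (Finset.mem_univ i)) (hm i)
  exact Set.mem_iUnion.2 ⟨Finset.univ.sup m + 1, Or.inr ⟨n, σ, as, has', ha⟩⟩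

/-- Well-founded induction: an element outside the ground is an output of some
multioperation, whose inputs are smaller and hence already generated. -/
theorem generatedBy_ground_of_wellFounded (M : MultiAlg S A) {r : A → A → Prop}
    (hr : WellFounded r)
    (hop : ∀ {n : ℕ} (σ : S n) (as : Fin n → A) {a : A}, a ∈ M.op σ as → ∀ i, r (as i) a) :
    M.GeneratedBy M.ground := by
  refine Set.eq_univ_iff_forall.2 fun a => hr.induction a fun a ih => ?_
  by_cases ha : a ∈ M.ground
  · exact M.subset_gen _ ha
  · obtain ⟨n, σ, as, hop_a⟩ := not_not.1 ha
    exact M.mem_gen_of_mem_op _ σ as (fun i => ih _ (hop σ as hop_a i)) hop_a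

end MultiAlg

namespace MTerm

variable {S : ℕ → Type u} {V : Type u}

inductive IsArg : MTerm S V → MTerm S V → Prop
  | mk {n : ℕ} (p : S n) (αs : Fin n → MTerm S V) (i : Fin n) : IsArg (αs i) (node p αs)

theorem isArg_wellFounded : WellFounded (@IsArg S V) := by
  refine ⟨fun t => ?_⟩
  induction t with
  | var v => exact ⟨_, by rintro _ ⟨⟩⟩
  | node p αs ih => exact ⟨_, by rintro _ ⟨⟩; exact ih _⟩

end MTerm

lemma mT_isArg_of_mem_op {S : ℕ → Type u} {V K : Type u} [Nonempty K] {n : ℕ} (σ : S n)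
    {αs : Fin n → MTerm (expSig S K) V} {t : MTerm (expSig S K) V}
    (ht : t ∈ (mT S V K).op σ αs) (i : Fin n) : MTerm.IsArg (αs i) t := by
  obtain ⟨β, rfl⟩ := ht
  exact .mk _ αs i

theorem stmt3_general (S : ℕ → Type u) (V K : Type u) [Nonempty K]
    {Bc : Set (MTerm (expSig S K) V)}
    (N : MultiAlg S ↥Bc) (hsub : MultiAlg.IsSubMultiAlg (mT S V K) N) :
    N.GeneratedBy N.ground :=
  N.generatedBy_ground_of_wellFounded (InvImage.wf Subtype.val MTerm.isArg_wellFounded)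
    fun σ bs b hb i => mT_isArg_of_mem_op σ (hsub σ bs ⟨b, hb, rfl⟩) i

/-- Every submultialgebra `𝒜` of `mT(Σ, V, κ)` is generated by its
ground `G(𝒜)`. -/
theorem stmt3 (S : ℕ → Type u) (V K : Type u) [Nonempty K]
    (hVS : Nonempty V ∨ Nonempty (S 0))
    {Bc : Set (MTerm (expSig S K) V)} (hBc : Bc.Nonempty)
    (N : MultiAlg S ↥Bc) (hsub : MultiAlg.IsSubMultiAlg (mT S V K) N) :
    N.GeneratedBy N.ground :=
  stmt3_general S V K N hsub
end

section
/- Let Σ be a signature, V a set of variables and κ > 0 a cardinal, with V ∪ Σ₀ ≠ ∅. Every submultialgebra 𝒜 of mT(Σ, V, κ) is cdf-generated by its ground G(𝒜). -/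
universe u

/-!
Every element of a submultialgebra `𝒜` of `mT(Σ, V, κ)` outside the ground is a term
`σ^β α₁⋯αₙ`, so it lies in the output of exactly one multioperation instance `σ(α₁,…,αₙ)`
(`𝒜` is disconnected), and its arguments are proper subterms (the relation "is an argument
of" is well founded). The extension `f_C` is then forced, and defined, by well-founded
recursion: `f` on the ground, and the value of `Cσ` at the unique decomposition elsewhere.
-/

namespace MultiAlg

variable {S : ℕ → Type u} {A B : Type u} (M : MultiAlg S A)

def IsArgOf (b a : A) : Prop :=
  ∃ (n : ℕ) (σ : S n) (as : Fin n → A) (i : Fin n), as i = b ∧ a ∈ M.op σ as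

structure Decomp (a : A) where
  {arity : ℕ}
  sym : S arity
  args : Fin arity → A
  mem : a ∈ M.op sym args

variable {M}

theorem nonempty_decomp_iff {a : A} : Nonempty (M.Decomp a) ↔ a ∈ M.build :=
  ⟨fun ⟨d⟩ => ⟨_, d.sym, d.args, d.mem⟩, fun ⟨_, σ, as, ha⟩ => ⟨⟨σ, as, ha⟩⟩⟩

theorem Disconnected.subsingleton_decomp (hM : M.Disconnected) (a : A) :
    Subsingleton (M.Decomp a) := by
  refine ⟨fun ⟨σ, as, ha⟩ ⟨θ, bs, hb⟩ => ?_⟩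
  obtain ⟨rfl, hσθ, hab⟩ := hM σ θ as bs ⟨a, ha, hb⟩
  cases hσθ
  cases hab
  rfl

theorem Decomp.isArgOf {a : A} (d : M.Decomp a) (i : Fin d.arity) : M.IsArgOf (d.args i) a :=
  ⟨_, d.sym, d.args, i, rfl, d.mem⟩

variable {N : MultiAlg S B}

open Classical in
/-- The homomorphism `f_C` extending `f` along the choices `C`. -/
noncomputable def cdfExtend (hwf : WellFounded M.IsArgOf) (f : M.ground → B)
    (C : ChoiceCol M N) : A → B :=
  hwf.fix fun a rec =>
    if h : a ∈ M.build then
      let d := Classical.choice (nonempty_decomp_iff.mpr h)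
      (C.choice d.sym d.args (fun i => rec (d.args i) (d.isArgOf i)) ⟨a, d.mem⟩).1
    else f ⟨a, h⟩

variable (hwf : WellFounded M.IsArgOf) (f : M.ground → B) (C : ChoiceCol M N)

theorem cdfExtend_of_mem_ground {a : A} (ha : a ∈ M.ground) :
    cdfExtend hwf f C a = f ⟨a, ha⟩ := by
  rw [cdfExtend, hwf.fix_eq, dif_neg ha]

theorem cdfExtend_of_mem_op (hM : M.Disconnected) {n : ℕ} (σ : S n) (as : Fin n → A) {a : A}
    (ha : a ∈ M.op σ as) :
    cdfExtend hwf f C a = (C.choice σ as (fun i => cdfExtend hwf f C (as i)) ⟨a, ha⟩).1 := by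
  have := hM.subsingleton_decomp a
  rw [cdfExtend, hwf.fix_eq, dif_pos ⟨n, σ, as, ha⟩]
  generalize Classical.choice _ = d
  obtain rfl := Subsingleton.elim d ⟨σ, as, ha⟩
  rfl

theorem eq_cdfExtend (hM : M.Disconnected) {g : A → B} (hg_ground : ∀ x : M.ground, g x = f x)
    (hg_choice : ∀ {n : ℕ} (σ : S n) (as : Fin n → A) (a : A) (ha : a ∈ M.op σ as),
      g a = (C.choice σ as (fun i => g (as i)) ⟨a, ha⟩).1) : g = cdfExtend hwf f C := by
  funext a
  induction a using hwf.induction with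
  | h a ih =>
    by_cases hb : a ∈ M.build
    · obtain ⟨n, σ, as, ha⟩ := hb
      have hargs : (fun i => g (as i)) = fun i => cdfExtend hwf f C (as i) :=
        funext fun i => ih _ ⟨n, σ, as, i, rfl, ha⟩
      rw [hg_choice σ as a ha, cdfExtend_of_mem_op hwf f C hM σ as ha, hargs]
    · exact (hg_ground ⟨a, hb⟩).trans (cdfExtend_of_mem_ground hwf f C hb).symm

theorem isCdfGenerated_ground (hM : M.Disconnected) (hwf : WellFounded M.IsArgOf) :
    M.IsCdfGenerated M.ground := by
  intro B _ N f C
  have hchoice := fun {n : ℕ} (σ : S n) (as : Fin n → A) (a : A) (ha : a ∈ M.op σ as) =>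
    cdfExtend_of_mem_op hwf f C hM σ as ha
  refine ⟨cdfExtend hwf f C, ⟨?_, fun x => cdfExtend_of_mem_ground hwf f C x.2, hchoice⟩, ?_⟩
  · rintro n σ as _ ⟨a, ha, rfl⟩
    rw [hchoice σ as a ha]
    exact (C.choice _ _ _ _).2
  · rintro g ⟨-, hg_ground, hg_choice⟩
    exact eq_cdfExtend hwf f C hM hg_ground hg_choice

end MultiAlg

namespace MTerm

variable {S : ℕ → Type u} {V : Type u}

def IsArg_s4 (t s : MTerm S V) : Prop :=
  ∃ (n : ℕ) (σ : S n) (ts : Fin n → MTerm S V) (i : Fin n), s = node σ ts ∧ ts i = t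

theorem wellFounded_isArg : WellFounded (@IsArg_s4 S V) := by
  refine ⟨fun s => ?_⟩
  induction s with
  | var _ => exact ⟨_, fun t ⟨_, _, _, _, h, _⟩ => nomatch h⟩
  | node σ ts ih =>
    refine ⟨_, fun t ⟨n, θ, us, i, h, hi⟩ => ?_⟩
    obtain ⟨rfl, -, rfl⟩ := node.inj h
    exact hi ▸ ih i

end MTerm

namespace MultiAlg.IsSubMultiAlg

variable {S : ℕ → Type u} {V K : Type u} [Nonempty K] {Bc : Set (MTerm (expSig S K) V)}
  {N : MultiAlg S Bc}

theorem exists_eq_node (hN : (mT S V K).IsSubMultiAlg N) {n : ℕ} {σ : S n} {as : Fin n → Bc}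
    {a : Bc} (ha : a ∈ N.op σ as) : ∃ β : K, a.1 = MTerm.node (σ, β) (fun i => (as i).1) :=
  hN σ as ⟨a, ha, rfl⟩

theorem disconnected (hN : (mT S V K).IsSubMultiAlg N) : N.Disconnected := by
  intro n m σ θ as bs ⟨a, ha, hb⟩
  obtain ⟨β, hβ⟩ := hN.exists_eq_node ha
  obtain ⟨γ, hγ⟩ := hN.exists_eq_node hb
  obtain ⟨rfl, hσθ, has⟩ := MTerm.node.inj (hβ.symm.trans hγ)
  obtain rfl : σ = θ := congrArg Prod.fst (eq_of_heq hσθ)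
  obtain rfl : as = bs := funext fun i => Subtype.ext (congrFun (eq_of_heq has) i)
  exact ⟨rfl, HEq.rfl, HEq.rfl⟩

theorem wellFounded_isArgOf (hN : (mT S V K).IsSubMultiAlg N) : WellFounded N.IsArgOf := by
  refine Subrelation.wf ?_ (InvImage.wf Subtype.val MTerm.wellFounded_isArg)
  rintro b a ⟨n, σ, as, i, rfl, ha⟩
  obtain ⟨β, hβ⟩ := hN.exists_eq_node ha
  exact ⟨n, (σ, β), _, i, hβ, rfl⟩

end MultiAlg.IsSubMultiAlg

theorem stmt4_general (S : ℕ → Type u) (V K : Type u) [Nonempty K]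
    {Bc : Set (MTerm (expSig S K) V)}
    (N : MultiAlg S ↥Bc) (hsub : MultiAlg.IsSubMultiAlg (mT S V K) N) :
    N.IsCdfGenerated N.ground :=
  MultiAlg.isCdfGenerated_ground hsub.disconnected hsub.wellFounded_isArgOf

/-- Every submultialgebra `𝒜` of `mT(Σ, V, κ)` is cdf-generated by
its ground `G(𝒜)`. -/
theorem stmt4 (S : ℕ → Type u) (V K : Type u) [Nonempty K]
    (hVS : Nonempty V ∨ Nonempty (S 0))
    {Bc : Set (MTerm (expSig S K) V)} (hBc : Bc.Nonempty)
    (N : MultiAlg S ↥Bc) (hsub : MultiAlg.IsSubMultiAlg (mT S V K) N) :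
    N.IsCdfGenerated N.ground :=
  stmt4_general S V K N hsub
end

section
/- Let Σ be a signature and 𝒜 = (A, {σ_𝒜}) a Σ-multialgebra that is cdf-generated by X ⊆ A. Then there exist a submultialgebra 𝒞 of mT(Σ, X, |A|) with X ⊆ C and an isomorphism f : 𝒜 → 𝒞 such that f(x) = x for every x ∈ X, where |A| denotes the cardinality of A. -/
universe u

/-- Decode a term back to an element of `A`: a variable decodes to itself,
a node decodes to its branch index. -/
def decodeT {S : ℕ → Type u} {A : Type u} {X : Set A} :
    MTerm (expSig S A) ↥X → A
  | .var x => x.1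
  | .node p _ => p.2

/-- The trivial multialgebra where every operation returns the whole universe. -/
def univAlg (S : ℕ → Type u) (B : Type u) [Nonempty B] : MultiAlg S B where
  op _ _ := Set.univ
  op_nonempty _ _ := ⟨Classical.arbitrary B, trivial⟩

/-- If `𝒜` is cdf-generated by `X`, then there is a
submultialgebra `𝒞` of `mT(Σ, X, |A|)` containing `X` and an isomorphism
`f : 𝒜 → 𝒞` fixing `X` pointwise. (The branching index type is taken to be `A`
itself, of cardinality `|A|`.) -/

theorem stmt6 {S : ℕ → Type u} {A : Type u} [Nonempty A]
    (M : MultiAlg S A) (X : Set A) (hX : M.IsCdfGenerated X) :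
    ∃ (Cc : Set (MTerm (expSig S A) ↥X)) (NC : MultiAlg S ↥Cc),
      MultiAlg.IsSubMultiAlg (mT S ↥X A) NC ∧
      (∀ x : ↥X, (MTerm.var x : MTerm (expSig S A) ↥X) ∈ Cc) ∧
      ∃ f : A → ↥Cc, MultiAlg.IsIso M NC f ∧
        ∀ (x : A) (hx : x ∈ X),
          (f x : MTerm (expSig S A) ↥X) = MTerm.var ⟨x, hx⟩ := by

  classical
  by_cases hT : Nonempty (MTerm (expSig S A) ↥X)
  · haveI := hT
    -- choice collection recording the produced element as branch index
    set C : MultiAlg.ChoiceCol M (mT S ↥X A) :=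
      ⟨fun {n} σ _as bs a => ⟨MTerm.node (σ, a.1) bs, a.1, rfl⟩⟩ with hCdef
    obtain ⟨g, ⟨hgHom, hgX, hgC⟩, hgUniq⟩ :=
      hX (MTerm (expSig S A) ↥X) (mT S ↥X A) MTerm.var C
    have hgC' : ∀ {n : ℕ} (σ : S n) (as : Fin n → A) (a : A), a ∈ M.op σ as →
        g a = MTerm.node (σ, a) (fun i => g (as i)) := by
      intro n σ as a ha
      exact hgC σ as a ha
    -- injectivity of g via decoding
    obtain ⟨h, _, hhUniq⟩ :=
      hX A (univAlg S A) (fun x => x.1)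
        ⟨fun {n} σ _as _bs a => ⟨a.1, trivial⟩⟩
    have h1 : (fun a => decodeT (g a)) = h := by
      apply hhUniq
      refine ⟨fun σ as => ?_, fun x => ?_, fun σ as a ha => ?_⟩
      · intro t _; trivial
      · rw [hgX x]; rfl
      · rw [hgC' σ as a ha]; rfl
    have h2 : (fun a : A => a) = h := by
      apply hhUniq
      exact ⟨fun σ as t _ => trivial, fun x => rfl, fun σ as a ha => rfl⟩
    have hli : ∀ a : A, decodeT (g a) = a := by
      intro a; exact (congrFun (h1.trans h2.symm) a)
    have hginj : Function.Injective g := by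
      intro a b hab
      have := congrArg decodeT hab
      rwa [hli, hli] at this
    refine ⟨Set.range g, ?_, ?_, ?_, ?_⟩
    · -- NC
      refine
        { op := fun {n} σ bs => (fun a => (⟨g a, a, rfl⟩ : ↥(Set.range g))) ''
            M.op σ (fun i => Function.invFun g (bs i).1)
          op_nonempty := fun σ bs => (M.op_nonempty σ _).image _ }
    · -- submultialgebra
      intro n σ bs
      rintro t ⟨c, ⟨a, ha, rfl⟩, rfl⟩
      refine ⟨a, ?_⟩
      show g a = _
      rw [hgC' σ _ a ha]
      congr 1
      funext i
      exact Function.invFun_eq (bs i).2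
    · intro x
      exact ⟨x.1, hgX x⟩
    · refine ⟨fun a => ⟨g a, a, rfl⟩, ⟨?_, ?_, ?_⟩, ?_⟩
      · -- full hom
        intro n σ as
        have harg : (fun i => Function.invFun g
            (((fun a => (⟨g a, a, rfl⟩ : ↥(Set.range g))) (as i)).1)) = as := by
          funext i
          exact Function.leftInverse_invFun hginj (as i)
        show _ = (fun a => (⟨g a, a, rfl⟩ : ↥(Set.range g))) '' M.op σ _
        rw [harg]
      · intro a b hab
        exact hginj (congrArg Subtype.val hab)
      · rintro ⟨t, a, rfl⟩
        exact ⟨a, rfl⟩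
      · intro x hx
        exact hgX ⟨x, hx⟩
  · exfalso
    have hXe : IsEmpty ↥X := ⟨fun x => hT ⟨MTerm.var x⟩⟩
    have hS0 : ∀ σ : S 0, False := fun σ =>
      hT ⟨MTerm.node (σ, Classical.arbitrary A) Fin.elim0⟩
    set C2 : MultiAlg.ChoiceCol M (univAlg S (ULift.{u} Bool)) :=
      ⟨fun {n} => match n with
        | 0 => fun σ => (hS0 σ).elim
        | n + 1 => fun _σ _as bs _a => ⟨bs 0, trivial⟩⟩ with hC2def
    obtain ⟨g2, _, hu⟩ :=
      hX (ULift.{u} Bool) (univAlg S (ULift.{u} Bool)) (fun x => hXe.elim x) C2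
    have hc : ∀ c : ULift.{u} Bool, (fun _ : A => c) = g2 := by
      intro c
      apply hu
      refine ⟨fun σ as t _ => trivial, fun x => hXe.elim x, ?_⟩
      intro n σ as a ha
      match n, σ with
      | 0, σ => exact (hS0 σ).elim
      | n + 1, σ => rfl
    have := congrFun ((hc ⟨true⟩).trans (hc ⟨false⟩).symm) (Classical.arbitrary A)
    simp at this
end

section
/- Let Σ be a signature. Every Σ-multialgebra 𝒜 that is cdf-generated (by some subset of its universe) is generated by its ground G(𝒜). -/
universe u

namespace MultiAlg

variable {S : ℕ → Type u} {A : Type u}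

lemma genFrom_mono_m (M : MultiAlg S A) (X : Set A) {m m' : ℕ} (h : m ≤ m') :
    M.genFrom X m ⊆ M.genFrom X m' := by
  induction h with
  | refl => exact fun a ha => ha
  | step h ih => exact fun a ha => Or.inl (ih ha)

lemma genFrom_mono_X (M : MultiAlg S A) {X Y : Set A} (h : X ⊆ Y) (m : ℕ) :
    M.genFrom X m ⊆ M.genFrom Y m := by
  induction m with
  | zero =>
    rintro a (ha | ha)
    · exact Or.inl (h ha)
    · exact Or.inr ha
  | succ m ih =>
    rintro a (ha | ⟨n, σ, as, has, hmem⟩)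
    · exact Or.inl (ih ha)
    · exact Or.inr ⟨n, σ, as, fun i => ih (has i), hmem⟩

end MultiAlg

/-- Every cdf-generated multialgebra is generated by its ground. -/
theorem stmt7 {S : ℕ → Type u} {A : Type u} [Nonempty A] (M : MultiAlg S A)
    (h : ∃ X : Set A, M.IsCdfGenerated X) :
    M.GeneratedBy M.ground := by
  classical
  obtain ⟨X, hX⟩ := h
  haveI : Nonempty (ULift.{u} Bool) := ⟨⟨true⟩⟩
  haveI : Nonempty (ULift.{u} ℕ) := ⟨⟨0⟩⟩
  set NB : MultiAlg S (ULift.{u} Bool) :=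
    ⟨fun _ _ => Set.univ, fun _ _ => ⟨⟨true⟩, trivial⟩⟩ with hNB
  -- Step B : every element is in X or in the build
  have hcover : ∀ a : A, a ∈ X ∨ a ∈ M.build := by
    by_contra hc
    push_neg at hc
    obtain ⟨a₀, ha₀X, ha₀B⟩ := hc
    obtain ⟨g, hg, huniq⟩ := hX (ULift.{u} Bool) NB (fun _ => ⟨true⟩)
      ⟨fun _ _ _ _ => ⟨⟨true⟩, trivial⟩⟩
    have h1 : (fun _ : A => (⟨true⟩ : ULift.{u} Bool)) = g := by
      refine huniq _ ⟨fun _ _ => Set.subset_univ _, fun _ => rfl, ?_⟩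
      intro n σ as a ha; rfl
    have h2 : (fun a : A => if a = a₀ then (⟨false⟩ : ULift.{u} Bool) else ⟨true⟩) = g := by
      refine huniq _ ⟨fun _ _ => Set.subset_univ _, ?_, ?_⟩
      · intro x
        have : (x : A) ≠ a₀ := fun e => ha₀X (e ▸ x.2)
        simp [this]
      · intro n σ as a ha
        have : a ≠ a₀ := fun e => ha₀B (e ▸ ⟨n, σ, as, ha⟩)
        simp [this]
    have := congrFun (h2.trans h1.symm) a₀
    simp at this
  -- Step C : X is disjoint from the build
  have hXg : ∀ x ∈ X, x ∉ M.build := by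
    rintro x hxX ⟨n, σ, as, hmem⟩
    obtain ⟨g, hg, -⟩ := hX (ULift.{u} Bool) NB (fun _ => ⟨true⟩)
      ⟨fun _ _ _ _ => ⟨⟨false⟩, trivial⟩⟩
    have e1 : g x = ⟨true⟩ := hg.2.1 ⟨x, hxX⟩
    have e2 : g x = ⟨false⟩ := hg.2.2 σ as x hmem
    rw [e1] at e2
    simpa using congrArg ULift.down e2
  -- Step D : a rank function
  obtain ⟨g, ⟨-, hgX, hgC⟩, -⟩ := hX (ULift.{u} ℕ)
    ⟨fun {n} _ bs => {⟨(Finset.univ.sup fun i => (bs i).down) + 1⟩},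
     fun _ _ => ⟨_, rfl⟩⟩
    (fun _ => ⟨0⟩)
    ⟨fun {n} _ _ bs _ => ⟨⟨(Finset.univ.sup fun i => (bs i).down) + 1⟩, rfl⟩⟩
  -- Step E : induction on the rank
  have key : ∀ k (a : A), (g a).down < k → a ∈ M.genFrom X k := by
    intro k
    induction k with
    | zero => exact fun a ha => absurd ha (Nat.not_lt_zero _)
    | succ k ih =>
      intro a ha
      rcases hcover a with hx | ⟨n, σ, as, hmem⟩
      · exact M.genFrom_mono_m X (Nat.zero_le _) (Or.inl hx)
      · have hrank := hgC σ as a hmem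
        have hlt : ∀ i, (g (as i)).down < k := by
          intro i
          have h1 : (g (as i)).down ≤ Finset.univ.sup fun j => (g (as j)).down :=
            Finset.le_sup (f := fun j => (g (as j)).down) (Finset.mem_univ i)
          have h2 : (g a).down = (Finset.univ.sup fun j => (g (as j)).down) + 1 :=
            congrArg ULift.down hrank
          omega
        exact Or.inr ⟨n, σ, as, fun i => ih (as i) (hlt i), hmem⟩
  have hXground : X ⊆ M.ground := fun x hx => hXg x hx
  ext a
  simp only [Set.mem_univ, iff_true]
  have : a ∈ M.genFrom X ((g a).down + 1) := key _ a (Nat.lt_succ_self _)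
  exact Set.mem_iUnion.2 ⟨(g a).down + 1, M.genFrom_mono_X hXground _ this⟩
end

section
/- Let Σ be a signature. If a Σ-multialgebra 𝒜 is cdf-generated by X ⊆ A, then X ⊆ G(𝒜). -/
universe u

/-- If `𝒜` is cdf-generated by `X`, then `X ⊆ G(𝒜)`. -/
theorem stmt8 {S : ℕ → Type u} {A : Type u} [Nonempty A] (M : MultiAlg S A)
    (X : Set A) (hX : M.IsCdfGenerated X) :
    X ⊆ M.ground := by
  intro x hx hb
  obtain ⟨n, σ, as, hop⟩ := hb
  let N : MultiAlg S (ULift Bool) :=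
    { op := fun _ _ => Set.univ
      op_nonempty := fun _ _ => ⟨⟨true⟩, trivial⟩ }
  let C : MultiAlg.ChoiceCol M N :=
    ⟨fun _ _ _ _ => ⟨⟨true⟩, trivial⟩⟩
  obtain ⟨g, ⟨_, hfx, hch⟩, _⟩ := hX (ULift Bool) N (fun _ => ⟨false⟩) C
  have h1 : g x = ⟨false⟩ := hfx ⟨x, hx⟩
  have h2 : g x = ⟨true⟩ := hch σ as x hop
  simp [h1] at h2
end

section
/- Let Σ be a signature. If a Σ-multialgebra 𝒜 is cdf-generated by both X and Y, with X ⊆ Y, then X = Y. -/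
universe u

/-- If `𝒜` is cdf-generated by both `X` and `Y` with `X ⊆ Y`,
then `X = Y`. -/
theorem stmt9 {S : ℕ → Type u} {A : Type u} [Nonempty A] (M : MultiAlg S A)
    (X Y : Set A) (hX : M.IsCdfGenerated X) (hY : M.IsCdfGenerated Y)
    (hXY : X ⊆ Y) : X = Y := by
  classical
  refine Set.Subset.antisymm hXY (fun y hyY => ?_)
  by_contra hyX
  let N : MultiAlg S (ULift Bool) :=
    { op := fun _ _ => Set.univ
      op_nonempty := fun _ _ => ⟨ULift.up true, Set.mem_univ _⟩ }
  let C : MultiAlg.ChoiceCol M N :=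
    { choice := fun _ _ _ _ => ⟨ULift.up false, Set.mem_univ _⟩ }
  obtain ⟨g₁, hg₁, uniq₁⟩ := hX (ULift Bool) N (fun _ => ULift.up true) C
  obtain ⟨g₂, hg₂, -⟩ := hY (ULift Bool) N
    (fun z => if (z : A) = y then ULift.up (!(g₁ y).down) else g₁ z) C
  have heq : g₂ = g₁ := by
    apply uniq₁
    refine ⟨hg₂.1, ?_, fun σ as a ha => hg₂.2.2 σ as a ha⟩
    intro x
    have hx := hg₂.2.1 ⟨(x : A), hXY x.2⟩
    have hne : (x : A) ≠ y := fun h => hyX (h ▸ x.2)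
    rw [hx, if_neg hne]
    exact hg₁.2.1 x
  have h2 : g₂ y = ULift.up (!(g₁ y).down) := by
    have := hg₂.2.1 ⟨y, hyY⟩
    simpa using this
  rw [heq] at h2
  have : (g₁ y).down = !(g₁ y).down := congrArg ULift.down h2
  simp at this
end

section
/- Let Σ be a signature. Every cdf-generated Σ-multialgebra 𝒜 is cdf-generated by its ground G(𝒜), and G(𝒜) is the unique subset of A by which 𝒜 is cdf-generated: if 𝒜 is cdf-generated by X, then X = G(𝒜). -/
universe u

/-- Every cdf-generated multialgebra is cdf-generated by its
ground, and the ground is the unique subset by which it is cdf-generated. -/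
theorem stmt10 {S : ℕ → Type u} {A : Type u} [Nonempty A] (M : MultiAlg S A)
    (h : ∃ X : Set A, M.IsCdfGenerated X) :
    M.IsCdfGenerated M.ground ∧
      ∀ X : Set A, M.IsCdfGenerated X → X = M.ground := by
  classical
  have key : ∀ X : Set A, M.IsCdfGenerated X → X = M.ground := by
    intro X hX
    -- the auxiliary target multialgebra on `ULift Bool`
    let N : MultiAlg S (ULift.{u} Bool) :=
      ⟨fun _ _ => {ULift.up false}, fun _ _ => ⟨ULift.up false, rfl⟩⟩
    have hNop : ∀ {n : ℕ} (σ : S n) (bs : Fin n → ULift.{u} Bool),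
        N.op σ bs = {ULift.up false} := fun _ _ => rfl
    let C : MultiAlg.ChoiceCol M N :=
      ⟨fun _ _ _ _ => ⟨ULift.up false, rfl⟩⟩
    apply Set.eq_of_subset_of_subset
    · -- X ⊆ ground
      intro x hx
      by_contra hb
      have hb' : x ∈ M.build := by
        simpa [MultiAlg.ground] using hb
      obtain ⟨n, σ, as, ha⟩ := hb'
      obtain ⟨g, ⟨hhom, hf, hc⟩, huniq⟩ :=
        hX (ULift.{u} Bool) N (fun _ => ULift.up true) C
      have h1 : g x = ULift.up true := hf ⟨x, hx⟩
      have h2 : g x = ULift.up false := hc σ as x ha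
      rw [h1] at h2
      exact Bool.noConfusion (congrArg ULift.down h2)
    · -- ground ⊆ X
      intro a ha
      by_contra hxa
      have hnb : a ∉ M.build := ha
      obtain ⟨g, hg, huniq⟩ :=
        hX (ULift.{u} Bool) N (fun _ => ULift.up false) C
      have e1 : (fun _ : A => ULift.up false) = g := by
        apply huniq
        refine ⟨?_, fun _ => rfl, fun σ as b hb => rfl⟩
        intro n σ as b hb
        rcases hb with ⟨c, _, rfl⟩
        exact rfl
      have e2 : (fun b : A => if b = a then ULift.up true else ULift.up false) = g := by
        apply huniq
        refine ⟨?_, ?_, ?_⟩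
        · intro n σ as b hb
          rcases hb with ⟨c, hc, rfl⟩
          have hca : c ≠ a := fun h => hnb (h ▸ ⟨n, σ, as, hc⟩)
          simp [hca, hNop]
        · intro x
          have hxne : (x : A) ≠ a := fun h => hxa (h ▸ x.2)
          simp [hxne]
        · intro n σ as b hb
          have hba : b ≠ a := fun h => hnb (h ▸ ⟨n, σ, as, hb⟩)
          simp [hba, C]
      have : (ULift.up false : ULift.{u} Bool) = ULift.up true := by
        have h1 := congrFun e1 a
        have h2 := congrFun e2 a
        simp at h2
        rw [h1, ← h2]
      exact Bool.noConfusion (congrArg ULift.down this)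
  obtain ⟨X, hX⟩ := h
  exact ⟨key X hX ▸ hX, key⟩
end

section
/- Let Σ be a signature. If a Σ-multialgebra 𝒜 is generated by its ground X = G(𝒜) and is disconnected, then 𝒜 is cdf-generated by X. -/
universe u

/-- If `𝒜` is generated by its ground and disconnected, then `𝒜`
is cdf-generated by its ground. -/
theorem stmt11 {S : ℕ → Type u} {A : Type u} [Nonempty A] (M : MultiAlg S A)
    (hgen : M.GeneratedBy M.ground) (hdisc : M.Disconnected) :
    M.IsCdfGenerated M.ground := by
  intro B _ N f C
  classical
  have hA : ∀ a : A, ∃ m, a ∈ M.genFrom M.ground m := by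
    intro a
    have h : a ∈ M.gen M.ground := by rw [hgen]; trivial
    simpa [MultiAlg.gen] using h
  set rank : A → ℕ := fun a => Nat.find (hA a) with hrankdef
  have hrank_spec : ∀ a, a ∈ M.genFrom M.ground (rank a) := fun a => Nat.find_spec (hA a)
  have hrank_le : ∀ a m, a ∈ M.genFrom M.ground m → rank a ≤ m := fun a m h => Nat.find_le h
  have hdesc : ∀ {n : ℕ} (σ : S n) (as : Fin n → A) (a : A), a ∈ M.op σ as →
      ∀ i, rank (as i) < rank a := by
    intro n σ as a ha i
    cases hm : rank a with
    | zero =>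
      have h0 : a ∈ M.genFrom M.ground 0 := hm ▸ hrank_spec a
      rcases h0 with hg | ⟨θ, hθ⟩
      · exact absurd ⟨n, σ, as, ha⟩ hg
      · obtain ⟨hn, _, _⟩ := hdisc σ θ as Fin.elim0 ⟨a, ha, hθ⟩
        subst hn; exact i.elim0
    | succ m =>
      have h1 : a ∈ M.genFrom M.ground (m+1) := hm ▸ hrank_spec a
      have h2 : a ∉ M.genFrom M.ground m := by
        intro h; have := hrank_le a m h; omega
      rcases h1 with h | ⟨n', θ, bs, hbs, hθ⟩
      · exact absurd h h2
      · obtain ⟨hn, hσ, has⟩ := hdisc σ θ as bs ⟨a, ha, hθ⟩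
        subst hn
        obtain rfl := eq_of_heq has
        have := hrank_le (as i) m (hbs i)
        omega
  have hbuild : ∀ a, a ∈ M.build → ∃ n : ℕ, ∃ σ : S n, ∃ as : Fin n → A, a ∈ M.op σ as :=
    fun _ h => h
  choose wn wσ was wha using hbuild
  let g : A → B := WellFounded.fix (InvImage.wf rank Nat.lt_wfRel.wf)
    (fun a rec =>
      if h : a ∈ M.build then
        (C.choice (wσ a h) (was a h)
          (fun i => rec (was a h i) (hdesc (wσ a h) (was a h) a (wha a h) i))
          ⟨a, wha a h⟩).1
      else f ⟨a, h⟩)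
  have hg_eq : ∀ a, g a =
      if h : a ∈ M.build then
        (C.choice (wσ a h) (was a h) (fun i => g (was a h i)) ⟨a, wha a h⟩).1
      else f ⟨a, h⟩ := by
    intro a
    exact WellFounded.fix_eq _ _ a
  have hkey : ∀ (a : A) {n n' : ℕ} (σ : S n) (σ' : S n') (as : Fin n → A) (as' : Fin n' → A)
      (ha : a ∈ M.op σ as) (ha' : a ∈ M.op σ' as') (gf : A → B),
      (C.choice σ as (fun i => gf (as i)) ⟨a, ha⟩).1
        = (C.choice σ' as' (fun i => gf (as' i)) ⟨a, ha'⟩).1 := by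
    intro a n n' σ σ' as as' ha ha' gf
    obtain ⟨hn, hσ, has⟩ := hdisc σ σ' as as' ⟨a, ha, ha'⟩
    subst hn
    obtain rfl := eq_of_heq hσ
    obtain rfl := eq_of_heq has
    rfl
  have hcompat : ∀ {n : ℕ} (σ : S n) (as : Fin n → A) (a : A) (ha : a ∈ M.op σ as),
      g a = (C.choice σ as (fun i => g (as i)) ⟨a, ha⟩).1 := by
    intro n σ as a ha
    have hb : a ∈ M.build := ⟨n, σ, as, ha⟩
    rw [hg_eq a, dif_pos hb]
    exact hkey a (wσ a hb) σ (was a hb) as (wha a hb) ha g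
  have hgr : ∀ x : ↥M.ground, g x = f x := by
    intro x
    rw [hg_eq x, dif_neg x.2]
  have hhom : MultiAlg.IsHom M N g := by
    intro n σ as
    rintro b ⟨a, ha, rfl⟩
    rw [hcompat σ as a ha]
    exact (C.choice σ as (fun i => g (as i)) ⟨a, ha⟩).2
  refine ⟨g, ⟨hhom, hgr, fun {n} σ as a ha => hcompat σ as a ha⟩, ?_⟩
  rintro g' ⟨-, hgr', hcomp'⟩
  have huniq : ∀ m a, rank a = m → g' a = g a := by
    intro m
    induction m using Nat.strong_induction_on with
    | _ m IH =>
      intro a hm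
      by_cases h : a ∈ M.build
      · obtain ⟨n, σ, as, ha⟩ := h
        rw [hcomp' σ as a ha, hcompat σ as a ha]
        have hfun : (fun i => g' (as i)) = fun i => g (as i) := by
          funext i
          exact IH (rank (as i)) (hm ▸ hdesc σ as a ha i) (as i) rfl
        rw [hfun]
      · calc g' a = f ⟨a, h⟩ := hgr' ⟨a, h⟩
          _ = g a := (hgr ⟨a, h⟩).symm
  funext a
  exact huniq (rank a) a rfl
end

section
/- Let Σ be a signature. A Σ-multialgebra 𝒜 is cdf-generated (by some subset of its universe) if and only if 𝒜 is generated by its ground G(𝒜) and is disconnected. -/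
universe u

namespace MultiAlgAux

open MultiAlg

variable {S : ℕ → Type u} {A B : Type u}

attribute [local instance] Classical.propDecidable

theorem genFrom_le (M : MultiAlg S A) (X : Set A) {m m' : ℕ} (h : m ≤ m') :
    M.genFrom X m ⊆ M.genFrom X m' := by
  induction h with
  | refl => exact subset_rfl
  | step _ ih => exact ih.trans Set.subset_union_left

theorem genFrom_mono (M : MultiAlg S A) {X Y : Set A} (h : X ⊆ Y) :
    ∀ m, M.genFrom X m ⊆ M.genFrom Y m := by
  intro m
  induction m with
  | zero => exact Set.union_subset_union_left _ h
  | succ k ih =>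
    rintro a (ha | ⟨n, σ, as, has, ha⟩)
    · exact Or.inl (ih ha)
    · exact Or.inr ⟨n, σ, as, fun i => ih (has i), ha⟩

theorem key (M : MultiAlg S A) (hd : M.Disconnected) {X : Set A}
    (hX : ∀ x ∈ X, x ∉ M.build) {a : A} {n : ℕ} {σ : S n} {as : Fin n → A}
    (ha : a ∈ M.op σ as) {m : ℕ} (hm : a ∈ M.genFrom X m)
    (hmin : ∀ k, k < m → a ∉ M.genFrom X k) (i : Fin n) :
    ∃ k, k < m ∧ as i ∈ M.genFrom X k := by
  cases m with
  | zero =>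
    rcases hm with hm | ⟨θ, hθ⟩
    · exact absurd ⟨n, σ, as, ha⟩ (hX a hm)
    · obtain ⟨hn, -, -⟩ := hd θ σ Fin.elim0 as ⟨a, hθ, ha⟩
      subst hn
      exact i.elim0
  | succ k =>
    rcases hm with hm | ⟨n', θ, bs, hbs, hθ⟩
    · exact absurd hm (hmin k (Nat.lt_succ_self k))
    · obtain ⟨hn, hσ, has⟩ := hd θ σ bs as ⟨a, hθ, ha⟩
      subst hn
      rw [eq_of_heq has] at hbs
      exact ⟨k, Nat.lt_succ_self k, hbs i⟩

theorem gen_op_inputs (M : MultiAlg S A) (hd : M.Disconnected) {X : Set A}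
    (hX : ∀ x ∈ X, x ∉ M.build) {a : A} (hgen : a ∈ M.gen X) {n : ℕ} {σ : S n}
    {as : Fin n → A} (ha : a ∈ M.op σ as) (i : Fin n) : as i ∈ M.gen X := by
  have hex : ∃ m, a ∈ M.genFrom X m := Set.mem_iUnion.mp hgen
  obtain ⟨k, -, hk⟩ := key M hd hX ha (Nat.find_spec hex)
    (fun k hk => Nat.find_min hex hk) i
  exact Set.mem_iUnion.mpr ⟨k, hk⟩

theorem mem_gen_op (M : MultiAlg S A) {X : Set A} {n : ℕ} {σ : S n} {as : Fin n → A}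
    (h : ∀ i, as i ∈ M.gen X) {a : A} (ha : a ∈ M.op σ as) : a ∈ M.gen X := by
  classical
  choose m hm using fun i => Set.mem_iUnion.mp (h i)
  exact Set.mem_iUnion.mpr ⟨Finset.univ.sup m + 1,
    Or.inr ⟨n, σ, as, fun i => genFrom_le M X (Finset.le_sup (Finset.mem_univ i)) (hm i), ha⟩⟩

theorem exists_genFrom (M : MultiAlg S A) (hg : M.GeneratedBy M.ground) (a : A) :
    ∃ m, a ∈ M.genFrom M.ground m := by
  have : a ∈ M.gen M.ground := by rw [hg]; trivial
  exact Set.mem_iUnion.mp this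

noncomputable def rk (M : MultiAlg S A) (hg : M.GeneratedBy M.ground) (a : A) : ℕ :=
  Nat.find (exists_genFrom M hg a)

theorem rk_lt (M : MultiAlg S A) (hd : M.Disconnected) (hg : M.GeneratedBy M.ground)
    {a : A} {n : ℕ} {σ : S n} {as : Fin n → A} (ha : a ∈ M.op σ as) (i : Fin n) :
    rk M hg (as i) < rk M hg a := by
  obtain ⟨k, hk, hmem⟩ := key M hd (fun x hx => hx) ha
    (Nat.find_spec (exists_genFrom M hg a))
    (fun k hk => Nat.find_min (exists_genFrom M hg a) hk) i
  exact lt_of_le_of_lt (Nat.find_le hmem) hk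

noncomputable def cdfExt (M : MultiAlg S A) (hd : M.Disconnected)
    (hg : M.GeneratedBy M.ground) (N : MultiAlg S B) (f : ↥M.ground → B)
    (C : M.ChoiceCol N) (a : A) : B :=
  if h : a ∈ M.build then
    (C.choice h.choose_spec.choose h.choose_spec.choose_spec.choose
      (fun i => cdfExt M hd hg N f C (h.choose_spec.choose_spec.choose i))
      ⟨a, h.choose_spec.choose_spec.choose_spec⟩).1
  else f ⟨a, h⟩
termination_by rk M hg a
decreasing_by
  all_goals exact rk_lt M hd hg h.choose_spec.choose_spec.choose_spec i

theorem choice_irrel (M : MultiAlg S A) (hd : M.Disconnected) (N : MultiAlg S B)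
    (C : M.ChoiceCol N) (g : A → B) {a : A} {n n' : ℕ} {σ : S n} {σ' : S n'}
    {as : Fin n → A} {as' : Fin n' → A} (ha : a ∈ M.op σ as) (ha' : a ∈ M.op σ' as') :
    (C.choice σ' as' (fun i => g (as' i)) ⟨a, ha'⟩).1
      = (C.choice σ as (fun i => g (as i)) ⟨a, ha⟩).1 := by
  obtain ⟨hn, hσ, has⟩ := hd σ' σ as' as ⟨a, ha', ha⟩
  subst hn
  cases eq_of_heq hσ
  cases eq_of_heq has
  rfl

theorem cdfExt_build (M : MultiAlg S A) (hd : M.Disconnected)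
    (hg : M.GeneratedBy M.ground) (N : MultiAlg S B) (f : ↥M.ground → B)
    (C : M.ChoiceCol N) {a : A} {n : ℕ} {σ : S n} {as : Fin n → A}
    (ha : a ∈ M.op σ as) :
    cdfExt M hd hg N f C a
      = (C.choice σ as (fun i => cdfExt M hd hg N f C (as i)) ⟨a, ha⟩).1 := by
  have h : a ∈ M.build := ⟨n, σ, as, ha⟩
  rw [cdfExt.eq_def (hd := hd), dif_pos h]
  exact choice_irrel M hd N C _ ha h.choose_spec.choose_spec.choose_spec

theorem cdfExt_ground (M : MultiAlg S A) (hd : M.Disconnected)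
    (hg : M.GeneratedBy M.ground) (N : MultiAlg S B) (f : ↥M.ground → B)
    (C : M.ChoiceCol N) {a : A} (h : a ∉ M.build) :
    cdfExt M hd hg N f C a = f ⟨a, h⟩ := by
  rw [cdfExt.eq_def (hd := hd), dif_neg h]

end MultiAlgAux
/-- `𝒜` is cdf-generated (by some subset) iff `𝒜` is generated by
its ground and disconnected. -/
theorem stmt12 {S : ℕ → Type u} {A : Type u} [Nonempty A] (M : MultiAlg S A) :
    (∃ X : Set A, M.IsCdfGenerated X) ↔
      (M.GeneratedBy M.ground ∧ M.Disconnected) := by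
  open MultiAlgAux in
  classical
  constructor
  · rintro ⟨X, hcdf⟩
    -- the all-universe multialgebra on `ULift Bool`
    set N : MultiAlg S (ULift.{u} Bool) :=
      ⟨fun _ _ => Set.univ, fun _ _ => ⟨ULift.up true, Set.mem_univ _⟩⟩ with hN
    -- Step 1: `M` is disconnected
    have hd : M.Disconnected := by
      intro n m σ θ as bs hne
      obtain ⟨c, hc1, hc2⟩ := hne
      by_contra hcon
      obtain ⟨g, ⟨-, -, hgc⟩, -⟩ := hcdf (ULift.{u} Bool) N (fun _ => ULift.up true)
        ⟨fun {k} τ cs _ _ => ⟨ULift.up (if (⟨k, τ, cs⟩ : Σ k, S k × (Fin k → A))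
          = ⟨n, σ, as⟩ then true else false), Set.mem_univ _⟩⟩
      have hcond : ¬ ((⟨m, θ, bs⟩ : Σ k, S k × (Fin k → A)) = ⟨n, σ, as⟩) := by
        intro e
        obtain ⟨he1, he2⟩ := Sigma.mk.inj_iff.mp e
        subst he1
        rw [heq_iff_eq] at he2
        injection he2 with e1 e2
        subst e1; subst e2
        exact hcon ⟨rfl, HEq.rfl, HEq.rfl⟩
      have h1 : g c = ULift.up (if (⟨n, σ, as⟩ : Σ k, S k × (Fin k → A))
          = ⟨n, σ, as⟩ then true else false) := hgc σ as c hc1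
      have h2 : g c = ULift.up (if (⟨m, θ, bs⟩ : Σ k, S k × (Fin k → A))
          = ⟨n, σ, as⟩ then true else false) := hgc θ bs c hc2
      rw [if_pos rfl] at h1
      rw [if_neg hcond, h1] at h2
      exact Bool.noConfusion (congrArg ULift.down h2)
    -- Step 2: `X` contains no element of the build
    have hX : ∀ x ∈ X, x ∉ M.build := by
      intro x hx hb
      obtain ⟨k, τ, cs, hc⟩ := hb
      obtain ⟨g, ⟨-, hgf, hgc⟩, -⟩ := hcdf (ULift.{u} Bool) N (fun _ => ULift.up true)
        ⟨fun _ _ _ _ => ⟨ULift.up false, Set.mem_univ _⟩⟩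
      have h1 : g x = ULift.up true := hgf ⟨x, hx⟩
      have h2 : g x = ULift.up false := hgc τ cs x hc
      rw [h1] at h2
      exact Bool.noConfusion (congrArg ULift.down h2)
    -- Step 3: `X` generates everything
    have hgenX : M.gen X = Set.univ := by
      obtain ⟨g, hgP, hgU⟩ := hcdf (ULift.{u} Bool) N (fun _ => ULift.up true)
        ⟨fun {k} τ cs bs _ => ⟨ULift.up (if ∀ i, bs i = ULift.up true then true else false),
          Set.mem_univ _⟩⟩
      have e1 : (fun _ : A => ULift.up true) = g := by
        apply hgU
        refine ⟨fun σ as => fun b _ => Set.mem_univ b, fun _ => rfl, ?_⟩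
        intro n σ as a ha
        show (ULift.up true : ULift Bool)
          = ULift.up (if ∀ _ : Fin n, (ULift.up true : ULift Bool) = ULift.up true
              then true else false)
        rw [if_pos (fun _ => rfl)]
      have e2 : (fun a : A => if a ∈ M.gen X then ULift.up true else ULift.up false) = g := by
        apply hgU
        refine ⟨fun σ as => fun b _ => Set.mem_univ b, ?_, ?_⟩
        · intro x
          have hx : (x : A) ∈ ⋃ m, M.genFrom X m := Set.mem_iUnion.mpr ⟨0, Or.inl x.2⟩
          exact if_pos hx
        · intro n σ as a ha
          show (if a ∈ M.gen X then (ULift.up true : ULift Bool) else ULift.up false)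
            = ULift.up (if ∀ i, (if as i ∈ M.gen X then (ULift.up true : ULift Bool)
                else ULift.up false) = ULift.up true then true else false)
          by_cases hmem : ∀ i, as i ∈ M.gen X
          · rw [if_pos (mem_gen_op M hmem ha), if_pos]
            intro i; rw [if_pos (hmem i)]
          · rw [if_neg (fun hA => hmem (fun i => gen_op_inputs M hd hX hA ha i)), if_neg]
            intro hall
            apply hmem; intro i
            by_contra hi
            have := hall i
            rw [if_neg hi] at this
            exact Bool.noConfusion (congrArg ULift.down this)
      ext a
      simp only [Set.mem_univ, iff_true]
      by_contra hA
      have hfe : (ULift.up true : ULift Bool)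
          = (if a ∈ M.gen X then ULift.up true else ULift.up false) :=
        congrFun (e1.trans e2.symm) a
      rw [if_neg hA] at hfe
      exact Bool.noConfusion (congrArg ULift.down hfe)
    refine ⟨?_, hd⟩
    have hsub : X ⊆ M.ground := fun x hx => hX x hx
    apply Set.eq_univ_of_univ_subset
    rw [← hgenX]
    exact Set.iUnion_mono (fun m => genFrom_mono M hsub m)
  · rintro ⟨hg, hd⟩
    refine ⟨M.ground, ?_⟩
    intro B _ N f C
    refine ⟨cdfExt M hd hg N f C, ⟨?_, ?_, ?_⟩, ?_⟩
    · intro n σ as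
      rintro b ⟨a, ha, rfl⟩
      rw [cdfExt_build M hd hg N f C ha]
      exact (C.choice σ as _ ⟨a, ha⟩).2
    · intro x
      rw [cdfExt_ground M hd hg N f C x.2]
    · intro n σ as a ha
      exact cdfExt_build M hd hg N f C ha
    · rintro g' ⟨hhom, hf, hch⟩
      have main : ∀ m a, rk M hg a = m → g' a = cdfExt M hd hg N f C a := by
        intro m
        induction m using Nat.strong_induction_on with
        | _ m ih =>
          intro a hm
          by_cases h : a ∈ M.build
          · obtain ⟨k, σ, as, ha⟩ := h
            rw [hch σ as a ha, cdfExt_build M hd hg N f C ha]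
            have heq : (fun i => g' (as i)) = fun i => cdfExt M hd hg N f C (as i) := by
              funext i
              exact ih _ (hm ▸ rk_lt M hd hg ha i) _ rfl
            rw [heq]
          · rw [hf ⟨a, h⟩, cdfExt_ground M hd hg N f C h]
      funext a
      exact main _ a rfl
end

section
/- Let Σ be a signature. If a Σ-multialgebra 𝒜 is chainless, then 𝒜 is generated by its ground G(𝒜). -/
universe u

lemma genFrom_mono {S : ℕ → Type u} {A : Type u} (M : MultiAlg S A) (X : Set A) :
    Monotone (M.genFrom X) := by
  apply monotone_nat_of_le_succ
  intro m a ha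
  exact Or.inl ha

lemma op_subset_gen {S : ℕ → Type u} {A : Type u} (M : MultiAlg S A) (X : Set A)
    {n : ℕ} (σ : S n) (as : Fin n → A) (h : ∀ i, as i ∈ M.gen X) :
    M.op σ as ⊆ M.gen X := by
  have h' : ∀ i, ∃ m, as i ∈ M.genFrom X m := fun i => Set.mem_iUnion.1 (h i)
  choose m hm using h'
  intro a ha
  exact Set.mem_iUnion.2 ⟨(Finset.univ.sup m) + 1,
    Or.inr ⟨n, σ, as, fun i => genFrom_mono M X (Finset.le_sup (Finset.mem_univ i)) (hm i), ha⟩⟩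

/-- If `𝒜` is chainless, then `𝒜` is generated by its ground. -/
theorem stmt17 {S : ℕ → Type u} {A : Type u} [Nonempty A] (M : MultiAlg S A)
    (h : M.Chainless) : M.GeneratedBy M.ground := by
  classical
  by_contra hgen
  have hstep : ∀ a : A, a ∉ M.gen M.ground → ∃ b : A, b ∉ M.gen M.ground ∧
      ∃ (m : ℕ) (σ : S (m + 1)) (cs : Fin (m + 1) → A) (j : Fin (m + 1)),
        cs j = b ∧ a ∈ M.op σ cs := by
    intro a ha
    have h0 : a ∉ M.genFrom M.ground 0 := fun hx => ha (Set.mem_iUnion.2 ⟨0, hx⟩)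
    have hbuild : a ∈ M.build := by
      by_contra hb
      exact h0 (Or.inl hb)
    obtain ⟨n, σ, cs, hop⟩ := hbuild
    match n, σ, cs with
    | 0, σ, cs =>
      exact absurd (Or.inr ⟨σ, by rwa [Subsingleton.elim Fin.elim0 cs]⟩) h0
    | m + 1, σ, cs =>
      by_cases hc : ∀ i, cs i ∈ M.gen M.ground
      · exact absurd (op_subset_gen M M.ground σ cs hc hop) ha
      · push_neg at hc
        obtain ⟨j, hj⟩ := hc
        exact ⟨cs j, hj, m, σ, cs, j, rfl, hop⟩
  obtain ⟨a0, ha0⟩ : ∃ a : A, a ∉ M.gen M.ground := by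
    by_contra h'
    push_neg at h'
    exact hgen (Set.eq_univ_of_forall h')
  let f : ℕ → {a : A // a ∉ M.gen M.ground} := fun k =>
    Nat.rec ⟨a0, ha0⟩
      (fun _ p => ⟨(hstep p.1 p.2).choose, (hstep p.1 p.2).choose_spec.1⟩) k
  refine h ⟨fun k => (f k).1, fun k => ?_⟩
  obtain ⟨m, σ, cs, j, hj, ha⟩ := (hstep (f k).1 (f k).2).choose_spec.2
  exact ⟨m, σ, cs, j, hj, ha⟩
end

section
/- Let Σ be a signature. A Σ-multialgebra 𝒜 is generated by its ground and disconnected if and only if 𝒜 is chainless and disconnected. -/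
universe u

namespace MultiAlg

lemma genFrom_le' {S : ℕ → Type u} {A : Type u} (M : MultiAlg S A) (X : Set A)
    {m m' : ℕ} (h : m ≤ m') : M.genFrom X m ⊆ M.genFrom X m' := by
  induction h with
  | refl => exact subset_rfl
  | step _ ih => exact fun a ha => Set.mem_union_left _ (ih ha)

end MultiAlg

/-- `𝒜` is generated by its ground and disconnected iff it is
chainless and disconnected. -/
theorem stmt18 {S : ℕ → Type u} {A : Type u} [Nonempty A] (M : MultiAlg S A) :
    (M.GeneratedBy M.ground ∧ M.Disconnected) ↔
      (M.Chainless ∧ M.Disconnected) := by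
  classical
  constructor
  · rintro ⟨hg, hd⟩
    refine ⟨?_, hd⟩
    rintro ⟨a, hc⟩
    have hex : ∀ k, ∃ m, a k ∈ M.genFrom M.ground m := by
      intro k
      have : a k ∈ M.gen M.ground := by rw [hg]; trivial
      exact Set.mem_iUnion.1 this
    have hdec : ∀ k, Nat.find (hex (k+1)) < Nat.find (hex k) := by
      intro k
      obtain ⟨m, σ, cs, j, hj, hmem⟩ := hc k
      have hspec := Nat.find_spec (hex k)
      cases hmk : Nat.find (hex k) with
      | zero =>
        rw [hmk] at hspec
        rcases hspec with hG | ⟨τ, hτ⟩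
        · exact absurd ⟨m+1, σ, cs, hmem⟩ hG
        · obtain ⟨hnm, _, _⟩ := hd σ τ cs Fin.elim0 ⟨a k, hmem, hτ⟩
          exact absurd hnm (Nat.succ_ne_zero m)
      | succ mk' =>
        rw [hmk] at hspec
        rcases hspec with hlt | ⟨n, θ, bs, hbs, hab⟩
        · exact absurd hlt (Nat.find_min (hex k) (by omega))
        · obtain ⟨hnm, hσθ, hcb⟩ := hd σ θ cs bs ⟨a k, hmem, hab⟩
          subst hnm
          have hcs : cs = bs := eq_of_heq hcb
          have : a (k+1) ∈ M.genFrom M.ground mk' := by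
            rw [← hj, hcs]; exact hbs j
          have h1 : Nat.find (hex (k+1)) ≤ mk' := Nat.find_min' (hex (k+1)) this
          omega
    have hmono : ∀ k, Nat.find (hex k) + k ≤ Nat.find (hex 0) := by
      intro k
      induction k with
      | zero => omega
      | succ k ih => have := hdec k; omega
    have := hmono (Nat.find (hex 0) + 1)
    omega
  · rintro ⟨hc, hd⟩
    refine ⟨?_, hd⟩
    by_contra hne
    have hex : ∃ a, a ∉ M.gen M.ground := by
      by_contra h
      push_neg at h
      exact hne (Set.eq_univ_of_forall h)
    have step : ∀ a, a ∉ M.gen M.ground → ∃ b, b ∉ M.gen M.ground ∧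
        ∃ (m : ℕ) (σ : S (m+1)) (cs : Fin (m+1) → A) (j : Fin (m+1)),
          cs j = b ∧ a ∈ M.op σ cs := by
      intro a ha
      have hB : a ∈ M.build := by
        by_contra hB
        exact ha (Set.mem_iUnion.2 ⟨0, Or.inl hB⟩)
      obtain ⟨n, σ, cs, hmem⟩ := hB
      cases n with
      | zero =>
        exfalso
        have hcs : cs = Fin.elim0 := funext fun i => i.elim0
        subst hcs
        exact ha (Set.mem_iUnion.2 ⟨0, Or.inr ⟨σ, hmem⟩⟩)
      | succ m =>
        by_cases hall : ∀ i, cs i ∈ M.gen M.ground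
        · exfalso
          choose g hg using fun i => Set.mem_iUnion.1 (hall i)
          have : a ∈ M.genFrom M.ground (Finset.univ.sup g + 1) :=
            Or.inr ⟨m+1, σ, cs, fun i =>
              M.genFrom_le' M.ground (Finset.le_sup (Finset.mem_univ i)) (hg i), hmem⟩
          exact ha (Set.mem_iUnion.2 ⟨_, this⟩)
        · push_neg at hall
          obtain ⟨j, hj⟩ := hall
          exact ⟨cs j, hj, m, σ, cs, j, rfl, hmem⟩
    obtain ⟨a0, ha0⟩ := hex
    choose f hf1 hf2 using step
    let seq : ℕ → {x : A // x ∉ M.gen M.ground} := fun k =>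
      Nat.rec ⟨a0, ha0⟩ (fun _ p => ⟨f p.1 p.2, hf1 p.1 p.2⟩) k
    refine hc ⟨fun k => (seq k).1, fun k => ?_⟩
    obtain ⟨m, σ, cs, j, hj, hm⟩ := hf2 (seq k).1 (seq k).2
    exact ⟨m, σ, cs, j, hj, hm⟩
end

section
/- Let Σ be a non-empty signature (i.e., Σₙ ≠ ∅ for some n ∈ ℕ) and let X be any set. Then there does not exist a Σ-multialgebra 𝒜 with X ⊆ A that satisfies the universal mapping property for the class of all Σ-multialgebras over X. -/
universe u

/-- For a non-empty signature `Σ`, no `Σ`-multialgebra satisfies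
the universal mapping property for the class of all `Σ`-multialgebras over any
subset `X` of its universe. -/
theorem stmt19 {S : ℕ → Type u} (hS : ∃ n : ℕ, Nonempty (S n))
    (A : Type u) [Nonempty A] (M : MultiAlg S A) (X : Set A) :
    ¬ M.HasUMP X := by
  intro hUMP
  obtain ⟨n, ⟨σ⟩⟩ := hS
  -- Step 1: X must be all of A, using the multialgebra where every op is `univ`.
  have hX : ∀ a : A, a ∈ X := by
    intro a
    by_contra ha
    let N1 : MultiAlg S (ULift Bool) :=
      { op := fun _ _ => Set.univ
        op_nonempty := fun _ _ => ⟨ULift.up false, trivial⟩ }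
    obtain ⟨g, _, hg⟩ := hUMP (ULift Bool) N1 (fun _ => ULift.up false)
    have h0 : (fun _ : A => ULift.up false) = g :=
      hg _ ⟨fun _ _ => Set.subset_univ _, fun _ => rfl⟩
    classical
    have h1 : (fun a' : A => if a' = a then ULift.up true else ULift.up false) = g := by
      refine hg _ ⟨fun _ _ => Set.subset_univ _, fun x => ?_⟩
      beta_reduce
      rw [if_neg]
      intro h; exact ha (h ▸ x.2)
    have := (h0.trans h1.symm)
    have := congrFun this a
    simp at this
  -- Step 2: use the constant-`{false}` multialgebra to get a contradiction.
  let N2 : MultiAlg S (ULift Bool) :=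
    { op := fun _ _ => {ULift.up false}
      op_nonempty := fun _ _ => ⟨ULift.up false, rfl⟩ }
  obtain ⟨g, ⟨ghom, gext⟩, _⟩ := hUMP (ULift Bool) N2 (fun _ => ULift.up true)
  obtain ⟨a, ha⟩ := M.op_nonempty σ (fun _ => Classical.arbitrary A)
  have h1 : g a ∈ ({ULift.up false} : Set (ULift Bool)) :=
    ghom σ _ ⟨a, ha, rfl⟩
  have h2 : g a = ULift.up true := gext ⟨a, hX a⟩
  rw [h2] at h1
  simp at h1
end
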